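/- arXiv:2010.16116 — 5 statements merged into one kernel-verified Lean document; each statement's English description precedes it below -/
import Mathlib

section
/- Let X1 and X2 be two distinct points of the Euclidean plane ℝ² and let θ ∈ (0, π). Then the set of points Z of the plane satisfying dist(Z, X1) = dist(Z, X2) and ∠X1 Z X2 = θ (the unsigned angle at vertex Z between the rays to X1 and X2) has exactly two elements. For θ = π, this set has exactly one element, namely the midpoint of the segment [X1, X2]. -/
open EuclideanGeometry Real

/-!
If `Z` is at distance `d` from both `X1` and `X2`, the law of cosines gives
`dist X1 X2 = 2 d sin (∠ X1 Z X2 / 2)`, so on the perpendicular bisector the angle `θ ∈ (0, π]`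
is seen exactly from the points at distance `d = dist X1 X2 / (2 sin (θ / 2))` from `X1`.
The perpendicular bisector is the line through the midpoint orthogonal to the radius of any
sphere centred at `X1`, so these points are where that line meets the circle of radius `d`
about `X1`: two points when `d` exceeds the distance `dist X1 X2 / 2` to the midpoint
(`θ < π`), and the midpoint alone when `d` equals it (`θ = π`).
-/

section Isosceles

variable {V P : Type*} [NormedAddCommGroup V] [InnerProductSpace ℝ V] [MetricSpace P]
  [NormedAddTorsor V P]

theorem dist_eq_two_mul_dist_mul_sin_half_angle {X1 X2 Z : P} (h : dist Z X1 = dist Z X2) :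
    dist X1 X2 = 2 * dist Z X1 * sin (∠ X1 Z X2 / 2) := by
  have hsin : 0 ≤ sin (∠ X1 Z X2 / 2) :=
    sin_nonneg_of_nonneg_of_le_pi (by linarith [angle_nonneg X1 Z X2])
      (by linarith [angle_le_pi X1 Z X2, pi_pos])
  have hhalf : cos (∠ X1 Z X2) = 1 - 2 * sin (∠ X1 Z X2 / 2) ^ 2 := by
    rw [← cos_two_mul_eq_one_sub, mul_div_cancel₀ _ two_ne_zero]
  have hcos := dist_sq_eq_dist_sq_add_dist_sq_sub_two_mul_dist_mul_dist_mul_cos_angle X1 Z X2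
  rw [hhalf, dist_comm X1 Z, dist_comm X2 Z, ← h] at hcos
  refine (sq_eq_sq₀ dist_nonneg (by positivity)).1 ?_
  linear_combination hcos

theorem angle_eq_iff_dist_eq_div_sin_half {X1 X2 Z : P} (h : dist Z X1 = dist Z X2)
    (hne : X1 ≠ X2) {θ : ℝ} (hθ : θ ∈ Set.Ioc 0 π) :
    ∠ X1 Z X2 = θ ↔ dist Z X1 = dist X1 X2 / (2 * sin (θ / 2)) := by
  have hsinθ : 0 < sin (θ / 2) :=
    sin_pos_of_pos_of_lt_pi (by linarith [hθ.1]) (by linarith [hθ.2, pi_pos])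
  have hD : 0 < dist X1 X2 := dist_pos.2 hne
  have hiso := dist_eq_two_mul_dist_mul_sin_half_angle h
  rw [eq_div_iff (by positivity)]
  constructor
  · rintro rfl
    linarith
  · intro hZ
    have hZpos : 0 < dist Z X1 := pos_of_mul_pos_left (hZ ▸ hD) (by positivity)
    have hsin : sin (∠ X1 Z X2 / 2) = sin (θ / 2) :=
      mul_left_cancel₀ (by positivity : 2 * dist Z X1 ≠ 0) (by linear_combination -(hZ + hiso))
    have hmem : ∀ x ∈ Set.Icc 0 π, x / 2 ∈ Set.Icc (-(π / 2)) (π / 2) := fun x hx =>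
      ⟨by linarith [hx.1, pi_pos], by linarith [hx.2]⟩
    have := injOn_sin (hmem _ ⟨angle_nonneg X1 Z X2, angle_le_pi X1 Z X2⟩)
      (hmem θ (Set.Ioc_subset_Icc_self hθ)) hsin
    linarith

theorem perpBisector_eq_orthRadius {X1 X2 : P} {s : Sphere P} (hc : s.center = X1) :
    AffineSubspace.perpBisector X1 X2 = s.orthRadius (midpoint ℝ X1 X2) := by
  ext Z
  rw [AffineSubspace.mem_perpBisector_iff_inner_eq_zero, Sphere.mem_orthRadius_iff_inner_left, hc,
    midpoint_vsub_left, real_inner_smul_right, mul_eq_zero_iff_left (by norm_num)]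

theorem setOf_dist_eq_and_angle_eq {X1 X2 : P} (hne : X1 ≠ X2) {θ : ℝ} (hθ : θ ∈ Set.Ioc 0 π)
    {s : Sphere P} (hc : s.center = X1) (hr : s.radius = dist X1 X2 / (2 * sin (θ / 2))) :
    {Z | dist Z X1 = dist Z X2 ∧ ∠ X1 Z X2 = θ} =
      (s : Set P) ∩ s.orthRadius (midpoint ℝ X1 X2) := by
  ext Z
  rw [Set.mem_inter_iff, ← perpBisector_eq_orthRadius hc, SetLike.mem_coe,
    AffineSubspace.mem_perpBisector_iff_dist_eq, Metric.mem_sphere, hc, hr, Set.mem_ofPred_eq]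
  exact ⟨fun ⟨h, hθZ⟩ => ⟨(angle_eq_iff_dist_eq_div_sin_half h hne hθ).1 hθZ, h⟩,
    fun ⟨hR, h⟩ => ⟨h, (angle_eq_iff_dist_eq_div_sin_half h hne hθ).2 hR⟩⟩

end Isosceles

/-- On the perpendicular bisector of a pair of distinct points of the plane,
for each angle `θ ∈ (0, π)` there are exactly two points seeing the pair with
unsigned angle `θ`; for `θ = π` there is exactly one such point, the midpoint. -/
theorem bisector_points_with_angle (X1 X2 : EuclideanSpace ℝ (Fin 2))
    (hne : X1 ≠ X2) (θ : ℝ) (hθ : θ ∈ Set.Ioo (0 : ℝ) π) :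
    {Z : EuclideanSpace ℝ (Fin 2) |
        dist Z X1 = dist Z X2 ∧ ∠ X1 Z X2 = θ}.ncard = 2 ∧
    {Z : EuclideanSpace ℝ (Fin 2) |
        dist Z X1 = dist Z X2 ∧ ∠ X1 Z X2 = π} = {midpoint ℝ X1 X2} := by
  have : Fact (Module.finrank ℝ (EuclideanSpace ℝ (Fin 2)) = 2) := ⟨finrank_euclideanSpace_fin⟩
  have hmid : dist (midpoint ℝ X1 X2) X1 = dist X1 X2 / 2 := by
    rw [dist_midpoint_left]; norm_num; ring
  have hD : 0 < dist X1 X2 := dist_pos.2 hne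
  constructor
  · have hsin : sin (θ / 2) < 1 := by
      simpa using sin_lt_sin_of_lt_of_le_pi_div_two (by linarith [hθ.1, pi_pos]) le_rfl
        (by linarith [hθ.2] : θ / 2 < π / 2)
    have hsin0 : 0 < sin (θ / 2) :=
      sin_pos_of_pos_of_lt_pi (by linarith [hθ.1]) (by linarith [hθ.2, pi_pos])
    rw [setOf_dist_eq_and_angle_eq (s := ⟨X1, dist X1 X2 / (2 * sin (θ / 2))⟩) hne
      (Set.Ioo_subset_Ioc_self hθ) rfl rfl]
    refine Sphere.ncard_inter_orthRadius_eq_two_of_dist_lt_radius ?_ (by simpa using hne)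
    rw [hmid]
    exact div_lt_div_of_pos_left hD (by positivity) (by linarith)
  · rw [setOf_dist_eq_and_angle_eq (s := ⟨X1, dist X1 X2 / 2⟩) hne ⟨pi_pos, le_rfl⟩ rfl
      (by simp), Sphere.inter_orthRadius_eq_singleton_of_dist_eq_radius hmid]
end

section
/- For all real numbers a > 0 and b > 0, ∫₀^∞ r e^{−a r²} erf(b r) dr = b / (2 a √(a + b²)), where erf(x) = (2/√π) ∫₀^x e^{−u²} du is the error function. -/
open Real MeasureTheory

/-!
Integrate by parts against the antiderivative `-e^{-ar²}/(2a)` of `r e^{-ar²}`. The boundary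
terms vanish since `erf` is bounded with `erf 0 = 0`, and `d/dr erf (b r) = (2b/√π) e^{-b²r²}`
turns the integral into the half-line Gaussian `(b / (a√π)) ∫₀^∞ e^{-(a+b²)r²} dr`.
-/

/-- The error function `erf x = (2/√π) ∫₀ˣ e^{−u²} du`. -/
noncomputable def erf (x : ℝ) : ℝ :=
  (2 / Real.sqrt π) * ∫ u in (0 : ℝ)..x, Real.exp (-u ^ 2)

open Filter Topology Set

theorem erf_zero : erf 0 = 0 := by
  simp [erf]

theorem hasDerivAt_erf (x : ℝ) : HasDerivAt erf (2 / √π * exp (-x ^ 2)) x := by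
  have hc : Continuous fun u : ℝ => exp (-u ^ 2) := by fun_prop
  exact (intervalIntegral.integral_hasDerivAt_right (hc.intervalIntegrable 0 x)
    hc.aestronglyMeasurable.stronglyMeasurableAtFilter hc.continuousAt).const_mul _

theorem abs_erf_le_two (x : ℝ) : |erf x| ≤ 2 := by
  have hint : Integrable fun u : ℝ => exp (-u ^ 2) := by
    simpa using integrable_exp_neg_mul_sq one_pos
  have hbound : |∫ u in (0 : ℝ)..x, exp (-u ^ 2)| ≤ √π :=
    calc |∫ u in (0 : ℝ)..x, exp (-u ^ 2)| ≤ ∫ u in uIoc 0 x, ‖exp (-u ^ 2)‖ :=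
          intervalIntegral.norm_integral_le_integral_norm_uIoc (f := fun u => exp (-u ^ 2))
      _ = ∫ u in uIoc 0 x, exp (-u ^ 2) := by simp only [norm_of_nonneg (exp_pos _).le]
      _ ≤ ∫ u, exp (-u ^ 2) :=
          setIntegral_le_integral hint (Eventually.of_forall fun _ => (exp_pos _).le)
      _ = √π := by simpa using integral_gaussian 1
  have hπ : 0 < √π := sqrt_pos.2 pi_pos
  calc |erf x| = 2 / √π * |∫ u in (0 : ℝ)..x, exp (-u ^ 2)| := by
        rw [erf, abs_mul, abs_of_pos (by positivity)]
    _ ≤ 2 / √π * √π := by gcongr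
    _ = 2 := by field_simp

theorem hasDerivAt_neg_exp_neg_mul_sq_div (a x : ℝ) (ha : a ≠ 0) :
    HasDerivAt (fun x => -(exp (-a * x ^ 2) / (2 * a))) (x * exp (-a * x ^ 2)) x := by
  have h := (((hasDerivAt_pow 2 x).const_mul (-a)).exp.div_const (2 * a)).neg
  exact h.congr_deriv (by field_simp; ring)

theorem integral_Ioi_mul_exp_neg_mul_sq_mul {a C : ℝ} {u u' : ℝ → ℝ} (ha : 0 < a)
    (hu : ∀ x, HasDerivAt u (u' x) x) (hu0 : u 0 = 0) (hbdd : ∀ x, ‖u x‖ ≤ C)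
    (hu' : IntegrableOn (fun x => exp (-a * x ^ 2) * u' x) (Ioi 0)) :
    ∫ x in Ioi 0, x * exp (-a * x ^ 2) * u x =
      (2 * a)⁻¹ * ∫ x in Ioi 0, exp (-a * x ^ 2) * u' x := by
  set v : ℝ → ℝ := fun x => -(exp (-a * x ^ 2) / (2 * a))
  have hcont : Continuous u := continuous_iff_continuousAt.2 fun x => (hu x).continuousAt
  have hv : Continuous v := by fun_prop
  have huv' : IntegrableOn (fun x => u x * (x * exp (-a * x ^ 2))) (Ioi 0) :=
    ((integrable_mul_exp_neg_mul_sq ha).bdd_mul hcont.aestronglyMeasurable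
      (Eventually.of_forall hbdd)).integrableOn
  have hu'v : IntegrableOn (fun x => u' x * v x) (Ioi 0) := by
    have : (fun x => u' x * v x) = fun x => -(2 * a)⁻¹ * (exp (-a * x ^ 2) * u' x) := by
      ext x; simp only [v]; ring
    rw [this]; exact hu'.const_mul _
  have h_zero : Tendsto (u * v) (𝓝[>] 0) (𝓝 0) := by
    simpa [hu0] using ((hcont.mul hv).tendsto 0).mono_left nhdsWithin_le_nhds
  have h_infty : Tendsto (u * v) atTop (𝓝 0) := by
    refine isBoundedUnder_le_mul_tendsto_zero
      ⟨C, eventually_map.2 (Eventually.of_forall hbdd)⟩ ?_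
    have : Tendsto (fun x => -a * x ^ 2) atTop atBot :=
      (tendsto_pow_atTop two_ne_zero).const_mul_atTop_of_neg (neg_neg_of_pos ha)
    simpa [v, neg_mul] using ((tendsto_exp_atBot.comp this).div_const (2 * a)).neg
  have ibp := integral_Ioi_mul_deriv_eq_deriv_mul (fun x _ => hu x)
    (fun x _ => hasDerivAt_neg_exp_neg_mul_sq_div a x ha.ne') huv' hu'v h_zero h_infty
  simp only [sub_zero, zero_sub, mul_neg, integral_neg, neg_neg] at ibp
  calc ∫ x in Ioi 0, x * exp (-a * x ^ 2) * u x
      = ∫ x in Ioi 0, u x * (x * exp (-a * x ^ 2)) := by congr 1; ext x; ring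
    _ = ∫ x in Ioi 0, (2 * a)⁻¹ * (exp (-a * x ^ 2) * u' x) := by
        rw [ibp]; congr 1; ext x; ring
    _ = _ := integral_const_mul _ _

theorem hasDerivAt_erf_const_mul (b x : ℝ) :
    HasDerivAt (fun r => erf (b * r)) (2 * b / √π * exp (-b ^ 2 * x ^ 2)) x := by
  have h := (hasDerivAt_erf (b * x)).comp x ((hasDerivAt_id x).const_mul b)
  exact h.congr_deriv (by rw [mul_pow, neg_mul]; ring)

theorem integral_exp_mul_erf_general (a b : ℝ) (ha : 0 < a) :
    ∫ r in Set.Ioi (0 : ℝ), r * Real.exp (-a * r ^ 2) * erf (b * r) =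
      b / (2 * a * Real.sqrt (a + b ^ 2)) := by
  have hab : 0 < a + b ^ 2 := by positivity
  have hprod : ∀ r : ℝ, exp (-a * r ^ 2) * (2 * b / √π * exp (-b ^ 2 * r ^ 2)) =
      2 * b / √π * exp (-(a + b ^ 2) * r ^ 2) := fun r => by
    rw [mul_left_comm, ← exp_add]; ring_nf
  have hint : IntegrableOn (fun r => exp (-a * r ^ 2) * (2 * b / √π * exp (-b ^ 2 * r ^ 2)))
      (Ioi 0) := by
    simp only [hprod]; exact ((integrable_exp_neg_mul_sq hab).const_mul _).integrableOn
  rw [integral_Ioi_mul_exp_neg_mul_sq_mul ha (hasDerivAt_erf_const_mul b) (by simp [erf_zero])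
    (fun r => (norm_eq_abs _).trans_le (abs_erf_le_two (b * r))) hint]
  simp only [hprod, integral_const_mul, integral_gaussian_Ioi, sqrt_div pi_pos.le]
  have hsqrt_ab : 0 < √(a + b ^ 2) := sqrt_pos.2 hab
  have hsqrt_pi : 0 < √π := sqrt_pos.2 pi_pos
  field_simp

/-- For `a, b > 0`, `∫₀^∞ r e^{−a r²} erf (b r) dr = b / (2 a √(a + b²))`. -/
theorem integral_exp_mul_erf (a b : ℝ) (ha : 0 < a) (hb : 0 < b) :
    ∫ r in Set.Ioi (0 : ℝ), r * Real.exp (-a * r ^ 2) * erf (b * r) =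
      b / (2 * a * Real.sqrt (a + b ^ 2)) :=
  integral_exp_mul_erf_general a b ha
end

section
/- For every λ > 0 and every t ∈ (0, π), ∫₀^{2π} ∫₀^∞ r e^{−λπ r²/4} ( ∫_{−r|cos φ| cot(t/2)}^{r|cos φ| cot(t/2)} e^{−λπ z²/(4 cos² φ)} dz ) dr dφ = (16 / (π λ^{3/2})) cos(t/2), where cot(t/2) = cos(t/2)/sin(t/2), and the inner integral is interpreted as 0 when cos φ = 0. -/
/-!
Put `b = λπ/4` and `k = cot (t/2)`. The substitution `z = |cos φ| u` turns the inner integral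
into `|cos φ| G(r)` with `G(r) = ∫_{-rk}^{rk} e^{-bu²} du`. Since `G'(r) = 2k e^{-bk²r²}`, the
function `(k/b) ∫_0^r e^{-b(1+k²)u²} du - e^{-br²} G(r) / (2b)` is a primitive of
`r e^{-br²} G(r)` vanishing at `0`, and `G` is bounded, so the `r`-integral equals
`(k/b) √(π/(b(1+k²))) / 2`, that is `cos (t/2) √(π/b) / (2b)`. Finally `∫_0^{2π} |cos φ| dφ = 4`.
-/

open Real MeasureTheory Set Filter Topology intervalIntegral

theorem integral_abs_cos_zero_two_pi : ∫ φ in (0 : ℝ)..2 * π, |cos φ| = 4 := by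
  have hper : Function.Periodic (fun φ => |cos φ|) π := fun φ => by simp [cos_add_pi]
  have hint (a c : ℝ) : IntervalIntegrable (fun φ => |cos φ|) volume a c :=
    continuous_cos.abs.intervalIntegrable a c
  have half : ∫ φ in -(π / 2)..π / 2, |cos φ| = 2 := by
    rw [integral_congr (g := cos), integral_cos]
    · norm_num
    · intro φ hφ
      rw [uIcc_of_le (by linarith [pi_pos])] at hφ
      exact abs_of_nonneg (cos_nonneg_of_mem_Icc hφ)
  calc ∫ φ in (0 : ℝ)..2 * π, |cos φ|
      _ = ∫ φ in (0 : ℝ)..0 + (2 : ℤ) • π, |cos φ| := by norm_num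
      _ = (2 : ℤ) • ∫ φ in (0 : ℝ)..0 + π, |cos φ| :=
        hper.intervalIntegral_add_zsmul_eq 2 0 hint
      _ = (2 : ℤ) • ∫ φ in -(π / 2)..-(π / 2) + π, |cos φ| := by
        rw [hper.intervalIntegral_add_eq 0]
      _ = 4 := by rw [show -(π / 2) + π = π / 2 by ring, half]; norm_num

section IntervalIntegral

variable {E : Type*} [NormedAddCommGroup E] [NormedSpace ℝ E]

theorem intervalIntegral_comp_div_neg_mul_mul (g : ℝ → E) (c s : ℝ) :
    ∫ z in -(c * s)..c * s, g (z / c) = c • ∫ u in -s..s, g u := by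
  rcases eq_or_ne c 0 with rfl | hc
  · simp
  · rw [integral_comp_div g hc, neg_div, mul_div_cancel_left₀ s hc]

theorem norm_intervalIntegral_le_integral_norm {f : ℝ → E} (hf : Integrable f) (a c : ℝ) :
    ‖∫ x in a..c, f x‖ ≤ ∫ x, ‖f x‖ :=
  norm_integral_le_integral_norm_uIoc.trans
    (setIntegral_le_integral hf.norm (.of_forall fun _ => norm_nonneg _))

theorem hasDerivAt_intervalIntegral_neg_mul_mul [CompleteSpace E] {f : ℝ → E}
    (hf : Continuous f) (k r : ℝ) :
    HasDerivAt (fun r => ∫ u in -(r * k)..r * k, f u) (k • (f (r * k) + f (-(r * k)))) r := by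
  have hΦ (s : ℝ) : HasDerivAt (fun s => ∫ u in (0 : ℝ)..s, f u) (f s) s :=
    (hf.integral_hasStrictDerivAt 0 s).hasDerivAt
  have hsplit : (fun r => ∫ u in -(r * k)..r * k, f u) =
      fun r => (∫ u in (0 : ℝ)..r * k, f u) - ∫ u in (0 : ℝ)..-(r * k), f u :=
    funext fun r => (integral_interval_sub_left (hf.intervalIntegrable _ _)
      (hf.intervalIntegrable _ _)).symm
  have hk : HasDerivAt (fun r : ℝ => r * k) k r := by simpa using (hasDerivAt_id r).mul_const k
  rw [hsplit]
  have h := ((hΦ (r * k)).scomp r hk).sub ((hΦ (-(r * k))).scomp r hk.neg)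
  rwa [neg_smul, sub_neg_eq_add, ← smul_add] at h

end IntervalIntegral

section Gaussian

-- Also for `c = 0`: the interval degenerates, and `d * c ^ 2 = 0` makes the exponent a junk `0`.
theorem intervalIntegral_exp_neg_mul_sq_div_mul_sq (a d c s : ℝ) :
    ∫ z in -(s * |c|)..s * |c|, exp (-(a * z ^ 2) / (d * c ^ 2)) =
      |c| * ∫ u in -s..s, exp (-(a / d) * u ^ 2) := by
  have h := intervalIntegral_comp_div_neg_mul_mul (fun u => exp (-(a / d) * u ^ 2)) |c| s
  rw [smul_eq_mul] at h
  rw [mul_comm s, ← h]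
  congr 1 with z
  rw [div_pow, sq_abs]
  congr 1
  ring

theorem hasDerivAt_intervalIntegral_exp_neg_mul_sq (b k r : ℝ) :
    HasDerivAt (fun r => ∫ u in -(r * k)..r * k, exp (-b * u ^ 2))
      (2 * k * exp (-b * k ^ 2 * r ^ 2)) r := by
  refine (hasDerivAt_intervalIntegral_neg_mul_mul (by fun_prop) k r).congr_deriv ?_
  simp only [smul_eq_mul, neg_sq]
  ring_nf

variable {b : ℝ}

theorem integral_Ioi_mul_exp_neg_mul_sq_mul_intervalIntegral (hb : 0 < b) (k : ℝ) :
    ∫ r in Ioi (0 : ℝ), r * exp (-b * r ^ 2) * ∫ u in -(r * k)..r * k, exp (-b * u ^ 2) =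
      k / b * (√(π / (b * (1 + k ^ 2))) / 2) := by
  set G : ℝ → ℝ := fun r => ∫ u in -(r * k)..r * k, exp (-b * u ^ 2)
  have hG (r : ℝ) : HasDerivAt G (2 * k * exp (-b * k ^ 2 * r ^ 2)) r :=
    hasDerivAt_intervalIntegral_exp_neg_mul_sq b k r
  have hGc : Continuous G := continuous_iff_continuousAt.2 fun r => (hG r).continuousAt
  have hGbdd (r : ℝ) : ‖G r‖ ≤ √(π / b) := by
    simpa [G, ← integral_gaussian b] using
      norm_intervalIntegral_le_integral_norm (integrable_exp_neg_mul_sq hb) (-(r * k)) (r * k)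
  set F : ℝ → ℝ := fun r =>
    k / b * (∫ u in (0 : ℝ)..r, exp (-(b * (1 + k ^ 2)) * u ^ 2)) -
      exp (-b * r ^ 2) * G r / (2 * b)
  have hF (r : ℝ) : HasDerivAt F (r * exp (-b * r ^ 2) * G r) r := by
    have hexp : HasDerivAt (fun r => exp (-b * r ^ 2)) (exp (-b * r ^ 2) * (-b * (2 * r))) r := by
      simpa using ((hasDerivAt_pow 2 r).const_mul (-b)).exp
    have hΨ := ((show Continuous fun u : ℝ => exp (-(b * (1 + k ^ 2)) * u ^ 2) by fun_prop)
      |>.integral_hasStrictDerivAt 0 r).hasDerivAt.const_mul (k / b)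
    refine (hΨ.sub ((hexp.mul (hG r)).div_const (2 * b))).congr_deriv ?_
    rw [show -(b * (1 + k ^ 2)) * r ^ 2 = -b * r ^ 2 + -b * k ^ 2 * r ^ 2 by ring, exp_add]
    field_simp
    ring
  have hint : IntegrableOn (fun r => r * exp (-b * r ^ 2) * G r) (Ioi 0) := by
    refine Integrable.mono'
      ((integrable_mul_exp_neg_mul_sq hb).mul_const (√(π / b))).integrableOn
      ((continuous_id.mul (by fun_prop)).mul hGc).aestronglyMeasurable ?_
    filter_upwards [ae_restrict_mem measurableSet_Ioi] with r (hr : 0 < r)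
    rw [norm_mul, norm_of_nonneg (by positivity)]
    exact mul_le_mul_of_nonneg_left (hGbdd r) (by positivity)
  have hlim : Tendsto F atTop (𝓝 (k / b * (√(π / (b * (1 + k ^ 2))) / 2))) := by
    have hΨ : Tendsto (fun r => ∫ u in (0 : ℝ)..r, exp (-(b * (1 + k ^ 2)) * u ^ 2)) atTop
        (𝓝 (√(π / (b * (1 + k ^ 2))) / 2)) := by
      rw [← integral_gaussian_Ioi]
      exact intervalIntegral_tendsto_integral_Ioi 0
        (integrable_exp_neg_mul_sq (by positivity)).integrableOn tendsto_id
    have hexp : Tendsto (fun r => exp (-b * r ^ 2)) atTop (𝓝 0) := tendsto_exp_atBot.comp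
      ((tendsto_pow_atTop two_ne_zero).const_mul_atTop_of_neg (neg_neg_of_pos hb))
    have hdecay : Tendsto (fun r => exp (-b * r ^ 2) * G r) atTop (𝓝 0) :=
      hexp.zero_mul_isBoundedUnder_le (isBoundedUnder_of ⟨_, hGbdd⟩)
    simpa only [zero_div, sub_zero] using (hΨ.const_mul (k / b)).sub (hdecay.div_const (2 * b))
  simpa [F, G] using integral_Ioi_of_hasDerivAt_of_tendsto' (fun r _ => hF r) hint hlim

theorem integral_Ioi_mul_exp_neg_mul_sq_mul_intervalIntegral_cot (hb : 0 < b) {x : ℝ}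
    (hx : 0 < sin x) :
    ∫ r in Ioi (0 : ℝ), r * exp (-b * r ^ 2) *
        ∫ u in -(r * (cos x / sin x))..r * (cos x / sin x), exp (-b * u ^ 2) =
      cos x * √(π / b) / (2 * b) := by
  have hcot : b * (1 + (cos x / sin x) ^ 2) = b / sin x ^ 2 := by
    field_simp
    exact sin_sq_add_cos_sq x
  rw [integral_Ioi_mul_exp_neg_mul_sq_mul_intervalIntegral hb, hcot, div_div_eq_mul_div,
    mul_comm π, mul_div_assoc, sqrt_mul (sq_nonneg _), sqrt_sq hx.le]
  field_simp

end Gaussian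

/-- The triple integral whose value yields the Palm distribution
`P(Θ ∈ (t, π)) = (1/2) cos (t/2)` of the Delaunay angle seen from line
crossings of a planar Poisson–Voronoi tessellation. When `cos φ = 0`, the
inner integral runs over the degenerate interval `[0, 0]` and hence is `0`. -/
theorem triple_integral_angle (lam t : ℝ) (hlam : 0 < lam)
    (ht : t ∈ Set.Ioo (0 : ℝ) π) :
    (∫ φ in (0 : ℝ)..(2 * π),
      ∫ r in Set.Ioi (0 : ℝ),
        r * Real.exp (-(lam * π * r ^ 2) / 4) *
          ∫ z in (-(r * |Real.cos φ| * (Real.cos (t / 2) / Real.sin (t / 2))))..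
              (r * |Real.cos φ| * (Real.cos (t / 2) / Real.sin (t / 2))),
            Real.exp (-(lam * π * z ^ 2) / (4 * Real.cos φ ^ 2))) =
    16 / (π * lam ^ ((3 : ℝ) / 2)) * Real.cos (t / 2) := by
  set k := cos (t / 2) / sin (t / 2)
  have hintegrand (φ r : ℝ) :
      r * exp (-(lam * π * r ^ 2) / 4) *
          ∫ z in -(r * |cos φ| * k)..r * |cos φ| * k,
            exp (-(lam * π * z ^ 2) / (4 * cos φ ^ 2)) =
        |cos φ| * (r * exp (-(lam * π / 4) * r ^ 2) *
          ∫ u in -(r * k)..r * k, exp (-(lam * π / 4) * u ^ 2)) := by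
    rw [show r * |cos φ| * k = r * k * |cos φ| by ring,
      intervalIntegral_exp_neg_mul_sq_div_mul_sq]
    ring_nf
  have hsin : 0 < sin (t / 2) :=
    sin_pos_of_pos_of_lt_pi (by linarith [ht.1]) (by linarith [ht.1, ht.2])
  simp_rw [hintegrand, MeasureTheory.integral_const_mul, k,
    integral_Ioi_mul_exp_neg_mul_sq_mul_intervalIntegral_cot (by positivity : 0 < lam * π / 4)
      hsin,
    intervalIntegral.integral_mul_const, integral_abs_cos_zero_two_pi]
  have hsqrt : √(π / (lam * π / 4)) = 2 / √lam := by
    rw [show π / (lam * π / 4) = 2 ^ 2 / lam by field_simp; ring, sqrt_div' _ hlam.le,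
      sqrt_sq zero_le_two]
  have hpow : lam ^ ((3 : ℝ) / 2) = lam * √lam := by
    rw [show (3 : ℝ) / 2 = 1 + 1 / 2 by norm_num, rpow_add hlam, rpow_one, ← sqrt_eq_rpow]
  rw [hsqrt, hpow]
  field_simp
  ring
end

section
/- For all real numbers a > 0, A > 0 and t ∈ (0, π), ∫₀^∞ r² ( ∫₀^{(r/a) cot(t/2)} ρ · exp( −(A/8) (a² ρ² + r²)^{3/2} ) dρ ) dr = (32 Γ(5/3) / (9 a² A^{5/3})) · (1 − sin³(t/2)), where cot(t/2) = cos(t/2)/sin(t/2) and Γ is the Gamma function. -/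
/-!
With `s = sin (t / 2)`, the substitution `u = a²ρ² + r²` turns the inner integral into
`(2a²)⁻¹ ∫_{r²}^{r²/s²} g u du` with `g u = exp (-(A/8) u^{3/2})`, because
`a² (r/a · cot (t/2))² + r² = r² / s²`. Exchanging the order of integration, a fixed `u` is
reached exactly by the `r ∈ [s√u, √u)`, which contribute `(1 - s³) u^{3/2} / 3`; what remains,
`∫₀^∞ u^{3/2} exp (-(A/8) u^{3/2}) du`, is a Gamma integral.
-/

open Real MeasureTheory Set

theorem intervalIntegral.integral_mul_comp_mul_sq_add {g : ℝ → ℝ} (hg : Continuous g) {k : ℝ}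
    (hk : k ≠ 0) (m b : ℝ) :
    ∫ ρ in (0 : ℝ)..b, ρ * g (k * ρ ^ 2 + m) = (2 * k)⁻¹ * ∫ u in m..k * b ^ 2 + m, g u := by
  have hderiv : ∀ x ∈ uIcc 0 b, HasDerivAt (fun ρ => k * ρ ^ 2 + m) (2 * k * x) x := fun x _ => by
    simpa [mul_comm, mul_left_comm, mul_assoc] using ((hasDerivAt_pow 2 x).const_mul k).add_const m
  have hsub := intervalIntegral.integral_comp_mul_deriv hderiv (by fun_prop) hg
  rw [zero_pow two_ne_zero, mul_zero, zero_add] at hsub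
  rw [← hsub, ← intervalIntegral.integral_const_mul]
  refine intervalIntegral.integral_congr fun x _ => ?_
  simp only [Function.comp_apply]
  field_simp

theorem sq_mul_sq_mul_cot_add_sq {a x : ℝ} (ha : a ≠ 0) (hx : sin x ≠ 0) (r : ℝ) :
    a ^ 2 * (r / a * (cos x / sin x)) ^ 2 + r ^ 2 = r ^ 2 / sin x ^ 2 := by
  field_simp
  linear_combination r ^ 2 * cos_sq_add_sin_sq x

section Band

variable {s : ℝ} {g : ℝ → ℝ}

noncomputable def bandIntegrand (s : ℝ) (g : ℝ → ℝ) : ℝ × ℝ → ℝ :=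
  {p | p.2 ∈ Ioc (p.1 ^ 2) (p.1 ^ 2 / s ^ 2)}.indicator fun p => p.1 ^ 2 * g p.2

theorem measurable_bandIntegrand (hg : Measurable g) : Measurable (bandIntegrand s g) :=
  (Measurable.indicator (by fun_prop)
    ((measurableSet_lt (by fun_prop : Measurable fun p : ℝ × ℝ => p.1 ^ 2) measurable_snd).inter
      (measurableSet_le measurable_snd (by fun_prop))))

theorem norm_bandIntegrand (p : ℝ × ℝ) :
    ‖bandIntegrand s g p‖ = bandIntegrand s (fun u => |g u|) p := by
  simp only [bandIntegrand, Set.indicator_apply, mem_ofPred_eq]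
  split_ifs <;> simp

theorem setIntegral_bandIntegrand_snd (hs0 : 0 < s) (hs1 : s ≤ 1) (r : ℝ) :
    ∫ u in Ioi 0, bandIntegrand s g (r, u) = r ^ 2 * ∫ u in r ^ 2..r ^ 2 / s ^ 2, g u := by
  have hle : r ^ 2 ≤ r ^ 2 / s ^ 2 :=
    le_div_self (sq_nonneg r) (by positivity) (pow_le_one₀ hs0.le hs1)
  have hsub : Ioc (r ^ 2) (r ^ 2 / s ^ 2) ⊆ Ioi 0 :=
    Ioc_subset_Ioi_self.trans (Ioi_subset_Ioi (sq_nonneg r))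
  change ∫ u in Ioi 0, (Ioc (r ^ 2) (r ^ 2 / s ^ 2)).indicator (fun u => r ^ 2 * g u) u = _
  rw [setIntegral_indicator measurableSet_Ioc, inter_eq_right.2 hsub, integral_const_mul,
    intervalIntegral.integral_of_le hle]

theorem bandIntegrand_eq_indicator_Ico (hs0 : 0 < s) {r u : ℝ} (hr : 0 < r) (hu : 0 < u) :
    bandIntegrand s g (r, u) = (Ico (s * √u) √u).indicator (fun r => r ^ 2 * g u) r := by
  have hmem : (r ^ 2 < u ∧ u ≤ r ^ 2 / s ^ 2) ↔ (s * √u ≤ r ∧ r < √u) := by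
    rw [and_comm, Real.lt_sqrt hr.le, le_div_iff₀ (by positivity),
      ← pow_le_pow_iff_left₀ (by positivity) hr.le two_ne_zero, mul_pow, sq_sqrt hu.le, mul_comm]
  simp only [bandIntegrand, Set.indicator_apply, mem_ofPred_eq, mem_Ioc, mem_Ico, hmem]

theorem setIntegral_bandIntegrand_fst (hs0 : 0 < s) (hs1 : s ≤ 1) {u : ℝ} (hu : 0 < u) :
    ∫ r in Ioi 0, bandIntegrand s g (r, u) = (1 - s ^ 3) / 3 * (u ^ (3 / 2 : ℝ) * g u) := by
  have hle : s * √u ≤ √u := mul_le_of_le_one_left (sqrt_nonneg u) hs1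
  have hsub : Ico (s * √u) √u ⊆ Ioi 0 :=
    Ico_subset_Ici_self.trans (Ici_subset_Ioi.2 (by positivity))
  have hcube : √u ^ 3 = u ^ (3 / 2 : ℝ) := by
    rw [sqrt_eq_rpow, ← rpow_natCast, ← rpow_mul hu.le]; norm_num
  rw [setIntegral_congr_fun measurableSet_Ioi
      fun r hr => bandIntegrand_eq_indicator_Ico hs0 hr hu, setIntegral_indicator measurableSet_Ico,
    inter_eq_right.2 hsub, integral_Ico_eq_integral_Ioo, ← integral_Ioc_eq_integral_Ioo, ← intervalIntegral.integral_of_le hle,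
    intervalIntegral.integral_mul_const, integral_pow, mul_pow, ← hcube]
  ring

theorem integrable_bandIntegrand (hg : Measurable g)
    (hint : IntegrableOn (fun u => u ^ (3 / 2 : ℝ) * g u) (Ioi 0)) (hs0 : 0 < s) (hs1 : s ≤ 1) :
    Integrable (bandIntegrand s g) ((volume.restrict (Ioi 0)).prod (volume.restrict (Ioi 0))) := by
  rw [integrable_prod_iff' (measurable_bandIntegrand hg).aestronglyMeasurable]
  constructor
  · filter_upwards [ae_restrict_mem measurableSet_Ioi] with u hu
    have hIco : IntegrableOn ((Ico (s * √u) √u).indicator fun r => r ^ 2 * g u) (Ioi 0) :=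
      ((continuous_pow 2).mul continuous_const).integrableOn_Icc.mono_set Ico_subset_Icc_self
        |>.integrable_indicator measurableSet_Ico |>.integrableOn
    exact hIco.congr_fun (fun r hr => (bandIntegrand_eq_indicator_Ico hs0 hr hu).symm)
      measurableSet_Ioi
  · simp_rw [norm_bandIntegrand]
    refine IntegrableOn.congr_fun (hint.norm.const_mul ((1 - s ^ 3) / 3)) (fun u hu => ?_)
      measurableSet_Ioi
    rw [setIntegral_bandIntegrand_fst hs0 hs1 hu, norm_mul,
      norm_of_nonneg (rpow_nonneg (le_of_lt hu) _), Real.norm_eq_abs]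

theorem integral_sq_mul_intervalIntegral_sq_div_sq (hg : Measurable g)
    (hint : IntegrableOn (fun u => u ^ (3 / 2 : ℝ) * g u) (Ioi 0)) (hs0 : 0 < s) (hs1 : s ≤ 1) :
    ∫ r in Ioi 0, r ^ 2 * ∫ u in r ^ 2..r ^ 2 / s ^ 2, g u =
      (1 - s ^ 3) / 3 * ∫ u in Ioi 0, u ^ (3 / 2 : ℝ) * g u := by
  calc ∫ r in Ioi 0, r ^ 2 * ∫ u in r ^ 2..r ^ 2 / s ^ 2, g u
      = ∫ r in Ioi 0, ∫ u in Ioi 0, bandIntegrand s g (r, u) := by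
        simp_rw [setIntegral_bandIntegrand_snd hs0 hs1]
    _ = ∫ u in Ioi 0, ∫ r in Ioi 0, bandIntegrand s g (r, u) :=
        integral_integral_swap (integrable_bandIntegrand hg hint hs0 hs1)
    _ = ∫ u in Ioi 0, (1 - s ^ 3) / 3 * (u ^ (3 / 2 : ℝ) * g u) :=
        setIntegral_congr_fun measurableSet_Ioi
          fun u hu => setIntegral_bandIntegrand_fst hs0 hs1 hu
    _ = (1 - s ^ 3) / 3 * ∫ u in Ioi 0, u ^ (3 / 2 : ℝ) * g u := integral_const_mul _ _

end Band

/-- The double integral arising in the computation of the Palm distribution of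
the angle with which line crossings of the two-dimensional facets of a
three-dimensional Poisson–Voronoi tessellation see the two nuclei. -/
theorem double_integral_3d (a A t : ℝ) (ha : 0 < a) (hA : 0 < A)
    (ht : t ∈ Set.Ioo (0 : ℝ) π) :
    (∫ r in Set.Ioi (0 : ℝ),
      r ^ 2 *
        ∫ ρ in (0 : ℝ)..(r / a * (Real.cos (t / 2) / Real.sin (t / 2))),
          ρ * Real.exp (-(A / 8) * (a ^ 2 * ρ ^ 2 + r ^ 2) ^ ((3 : ℝ) / 2))) =
    32 * Real.Gamma (5 / 3) / (9 * a ^ 2 * A ^ ((5 : ℝ) / 3)) *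
      (1 - Real.sin (t / 2) ^ 3) := by
  set s := sin (t / 2)
  have hs0 : 0 < s := sin_pos_of_pos_of_lt_pi (by linarith [ht.1]) (by linarith [ht.2, pi_pos])
  set g : ℝ → ℝ := fun u => exp (-(A / 8) * u ^ (3 / 2 : ℝ))
  have hg : Continuous g := by fun_prop (disch := norm_num)
  have hinner (r : ℝ) :
      ∫ ρ in (0 : ℝ)..(r / a * (cos (t / 2) / s)), ρ * g (a ^ 2 * ρ ^ 2 + r ^ 2) =
        (2 * a ^ 2)⁻¹ * ∫ u in r ^ 2..r ^ 2 / s ^ 2, g u := by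
    rw [intervalIntegral.integral_mul_comp_mul_sq_add hg (by positivity),
      sq_mul_sq_mul_cot_add_sq ha.ne' hs0.ne']
  have hA8 : (A / 8) ^ (-(3 / 2 + 1) / (3 / 2) : ℝ) = 32 / A ^ (5 / 3 : ℝ) := by
    rw [div_rpow hA.le (by norm_num), show (-(3 / 2 + 1) / (3 / 2) : ℝ) = -(5 / 3) by norm_num,
      rpow_neg hA.le, rpow_neg (by norm_num), show (8 : ℝ) = 2 ^ (3 : ℝ) by norm_num,
      ← rpow_mul (by norm_num)]
    norm_num
    field_simp
  calc _ = ∫ r in Ioi 0, (2 * a ^ 2)⁻¹ * (r ^ 2 * ∫ u in r ^ 2..r ^ 2 / s ^ 2, g u) := by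
        congr 1 with r
        rw [mul_left_comm, ← hinner]
    _ = (2 * a ^ 2)⁻¹ * ((1 - s ^ 3) / 3 * ∫ u in Ioi 0, u ^ (3 / 2 : ℝ) * g u) := by
        rw [integral_const_mul, integral_sq_mul_intervalIntegral_sq_div_sq hg.measurable
          (integrableOn_rpow_mul_exp_neg_mul_rpow (by norm_num) (by norm_num) (by positivity))
          hs0 (sin_le_one _)]
    _ = _ := by
        rw [integral_rpow_mul_exp_neg_mul_rpow (by norm_num) (by norm_num) (by positivity), hA8]
        norm_num
        field_simp
        ring
end

section
/- Let ψ ∈ (0, π) and φ' be real numbers with sin ψ · cos φ' ≠ 0. Then ∫₀^{2π} (sin² ψ · cos² φ') / (1 − (sin ψ · sin φ · sin φ' − cos ψ · cos φ)²) dφ = 2π · sin ψ · |cos φ'|. -/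
/-!
By harmonic addition, `sin ψ sin φ sin φ' - cos ψ cos φ = R sin (φ - θ)` with
`1 - R² = sin² ψ cos² φ' = c²`, so the integrand is `c² / (c² sin² (φ - θ) + cos² (φ - θ))`.
A continuous branch of `arctan (c tan x) / c` is an antiderivative of `1 / (c² sin² x + cos² x)`
that gains exactly `2π / c` over every period, whatever the phase `θ`.
-/

open Real

lemma mul_sin_sq_add_cos_sq_pos {r : ℝ} (hr : 0 < r) (x : ℝ) :
    0 < r * sin x ^ 2 + cos x ^ 2 := by
  rcases le_total r 1 with h | h
  · nlinarith [sin_sq_add_cos_sq x, mul_nonneg (sub_nonneg.2 h) (sq_nonneg (cos x))]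
  · nlinarith [sin_sq_add_cos_sq x, mul_nonneg (sub_nonneg.2 h) (sq_nonneg (sin x))]

/-- The continuous branch of `arctan (r tan x)`: the arctangent term is `arctan (r tan x) - x`
by the subtraction formula for `arctan`. -/
noncomputable def unwrappedArctanMulTan (r x : ℝ) : ℝ :=
  x + arctan ((r - 1) * sin x * cos x / (r * sin x ^ 2 + cos x ^ 2))

lemma unwrappedArctanMulTan_add_two_pi (r x : ℝ) :
    unwrappedArctanMulTan r (x + 2 * π) = unwrappedArctanMulTan r x + 2 * π := by
  simp only [unwrappedArctanMulTan, sin_add_two_pi, cos_add_two_pi]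
  ring

lemma hasDerivAt_unwrappedArctanMulTan {r : ℝ} (hr : 0 < r) (x : ℝ) :
    HasDerivAt (unwrappedArctanMulTan r) (r / (r ^ 2 * sin x ^ 2 + cos x ^ 2)) x := by
  have hnum : HasDerivAt (fun y => (r - 1) * sin y * cos y)
      ((r - 1) * (cos x ^ 2 - sin x ^ 2)) x :=
    (((hasDerivAt_sin x).const_mul (r - 1)).mul (hasDerivAt_cos x)).congr_deriv (by ring)
  have hden : HasDerivAt (fun y => r * sin y ^ 2 + cos y ^ 2)
      (2 * (r - 1) * sin x * cos x) x :=
    ((((hasDerivAt_sin x).pow 2).const_mul r).add ((hasDerivAt_cos x).pow 2)).congr_deriv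
      (by push_cast; ring)
  have hden_pos := mul_sin_sq_add_cos_sq_pos hr x
  have hden_sq_pos := mul_sin_sq_add_cos_sq_pos (pow_pos hr 2) x
  refine ((hasDerivAt_id x).add (hnum.div hden hden_pos.ne').arctan).congr_deriv ?_
  simp only [Pi.div_apply]
  field_simp
  linear_combination
    r * (sin x ^ 2 + cos x ^ 2) * (r ^ 2 * sin x ^ 2 + cos x ^ 2) * sin_sq_add_cos_sq x

lemma integral_one_div_sq_mul_sin_sq_add_cos_sq {r : ℝ} (hr : 0 < r) (t : ℝ) :
    ∫ x in t..t + 2 * π, 1 / (r ^ 2 * sin x ^ 2 + cos x ^ 2) = 2 * π / r := by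
  have hderiv (x : ℝ) : HasDerivAt (fun y => unwrappedArctanMulTan r y / r)
      (1 / (r ^ 2 * sin x ^ 2 + cos x ^ 2)) x :=
    ((hasDerivAt_unwrappedArctanMulTan hr x).div_const r).congr_deriv (by field_simp)
  have hcont : Continuous fun x => 1 / (r ^ 2 * sin x ^ 2 + cos x ^ 2) :=
    continuous_const.div (by fun_prop) fun x => (mul_sin_sq_add_cos_sq_pos (pow_pos hr 2) x).ne'
  rw [intervalIntegral.integral_eq_sub_of_hasDerivAt (fun x _ => hderiv x)
    (hcont.intervalIntegrable _ _), unwrappedArctanMulTan_add_two_pi]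
  ring

lemma exists_mul_sin_sub_mul_cos_eq (a b : ℝ) :
    ∃ R θ : ℝ, R ^ 2 = a ^ 2 + b ^ 2 ∧ ∀ φ, a * sin φ - b * cos φ = R * sin (φ - θ) := by
  set z : ℂ := ⟨a, b⟩
  have hcos : ‖z‖ * cos z.arg = a := Complex.norm_mul_cos_arg z
  have hsin : ‖z‖ * sin z.arg = b := Complex.norm_mul_sin_arg z
  refine ⟨‖z‖, z.arg, ?_, fun φ => ?_⟩
  · linear_combination (-‖z‖ ^ 2) * sin_sq_add_cos_sq z.arg + (‖z‖ * cos z.arg + a) * hcos +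
      (‖z‖ * sin z.arg + b) * hsin
  · rw [sin_sub]
    linear_combination (-sin φ) * hcos + cos φ * hsin

/-- The angular integral arising in the spherical-coordinate computation of
the Palm angle distribution for line crossings of a three-dimensional
Poisson–Voronoi tessellation. -/
theorem angular_integral (ψ φ' : ℝ) (hψ : ψ ∈ Set.Ioo (0 : ℝ) π)
    (h : Real.sin ψ * Real.cos φ' ≠ 0) :
    (∫ φ in (0 : ℝ)..(2 * π),
      Real.sin ψ ^ 2 * Real.cos φ' ^ 2 /
        (1 - (Real.sin ψ * Real.sin φ * Real.sin φ' -
          Real.cos ψ * Real.cos φ) ^ 2)) =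
    2 * π * Real.sin ψ * |Real.cos φ'| := by
  obtain ⟨R, θ, hR, hshift⟩ := exists_mul_sin_sub_mul_cos_eq (sin ψ * sin φ') (cos ψ)
  set c := sin ψ * |cos φ'|
  have hc : 0 < c :=
    mul_pos (sin_pos_of_pos_of_lt_pi hψ.1 hψ.2) (abs_pos.2 (right_ne_zero_of_mul h))
  have hc_sq : sin ψ ^ 2 * cos φ' ^ 2 = c ^ 2 := by rw [mul_pow, sq_abs]
  have hR_sq : 1 - R ^ 2 = c ^ 2 := by
    rw [hR, ← hc_sq]
    linear_combination -sin_sq_add_cos_sq ψ - sin ψ ^ 2 * sin_sq_add_cos_sq φ'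
  have hintegrand (φ : ℝ) : sin ψ ^ 2 * cos φ' ^ 2 /
      (1 - (sin ψ * sin φ * sin φ' - cos ψ * cos φ) ^ 2) =
      c ^ 2 * (1 / (c ^ 2 * sin (φ - θ) ^ 2 + cos (φ - θ) ^ 2)) := by
    rw [show sin ψ * sin φ * sin φ' - cos ψ * cos φ = R * sin (φ - θ) by
      linear_combination hshift φ, hc_sq, mul_one_div]
    congr 1
    linear_combination sin (φ - θ) ^ 2 * hR_sq - sin_sq_add_cos_sq (φ - θ)
  calc _ = c ^ 2 * ∫ φ in (0 : ℝ)..(2 * π), 1 / (c ^ 2 * sin (φ - θ) ^ 2 + cos (φ - θ) ^ 2) := by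
        simp_rw [hintegrand, intervalIntegral.integral_const_mul]
    _ = c ^ 2 * (2 * π / c) := by
        rw [intervalIntegral.integral_comp_sub_right (fun x => 1 / (c ^ 2 * sin x ^ 2 + cos x ^ 2)),
          zero_sub, sub_eq_neg_add, integral_one_div_sq_mul_sin_sq_add_cos_sq hc]
    _ = 2 * π * sin ψ * |cos φ'| := by
        field_simp
        ring
end
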